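/- Let (X_i) be i.i.d. with symmetric distribution and S_n = X_1 + ⋯ + X_n. Then for any x ∈ ℝ, δ > 0 and even n, P(S_n ∈ [x−δ, x+δ]) ≤ 4·P(S_n ∈ (−δ, δ)). In particular, P(|S_{2n+1}| < ε) ≤ 4·P(|S_{2n}| < ε) for every ε > 0. -/

import Mathlib

/-!
Write `S_{2m} = A + B` with `A`, `B` independent copies of the symmetric variable `S_m`, of law `ρ`,
and put `G(w) = ρ [w - η, w + η]`. The tent `s ↦ (2η - |s|)⁺` is the length of the overlap of two
windows of radius `η` at distance `s`, so by Fubini and the symmetry of `ρ` its integral against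
the law `ρ ∗ ρ` of `S_{2m}`, shifted by `x`, is `∫ G(w) G(w - x) dw`, which by Cauchy–Schwarz is
largest at `x = 0`. As the tent is at least `η` on `[x - η, x + η]` and at most `2η` on
`(-2η, 2η)`, this gives `P(S_{2m} ∈ [x - η, x + η]) ≤ 2 P(|S_{2m}| < 2η)`; covering
`[x - δ, x + δ]` by two windows of radius `δ / 2` gives the constant `4`. For
`S_{2n+1} = S_{2n} + X_{2n}`, condition on `X_{2n}`.
-/

open MeasureTheory ProbabilityTheory Set Metric
open scoped ENNReal

noncomputable def tent (η s : ℝ) : ℝ≥0∞ := ENNReal.ofReal (2 * η - |s|)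

@[fun_prop]
lemma measurable_tent (η : ℝ) : Measurable (tent η) := by
  unfold tent; fun_prop

lemma volume_closedBall_inter_closedBall (η a b : ℝ) :
    volume (closedBall a η ∩ closedBall b η) = tent η (a - b) := by
  rw [Real.closedBall_eq_Icc, Real.closedBall_eq_Icc, Icc_inter_Icc, Real.volume_Icc, tent,
    min_add_add_right, max_sub_sub_right, ← max_sub_min_eq_abs, max_comm b, min_comm b]
  ring_nf

lemma ofReal_le_tent {η s : ℝ} (hs : |s| ≤ η) : ENNReal.ofReal η ≤ tent η s :=
  ENNReal.ofReal_le_ofReal (by linarith)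

lemma tent_le_indicator_ball (η s : ℝ) :
    tent η s ≤ (ball 0 (2 * η)).indicator (fun _ ↦ ENNReal.ofReal (2 * η)) s := by
  by_cases hs : s ∈ ball 0 (2 * η)
  · rw [indicator_of_mem hs]
    exact ENNReal.ofReal_le_ofReal (by linarith [abs_nonneg s])
  · rw [mem_ball_zero_iff, Real.norm_eq_abs, not_lt] at hs
    simp [tent, hs]

lemma lintegral_mul_comp_add_right_le_lintegral_sq {G : Type*} [MeasurableSpace G] [AddGroup G]
    [MeasurableAdd G] (μ : Measure G) [μ.IsAddRightInvariant] {f : G → ℝ≥0∞}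
    (hf : Measurable f) (c : G) :
    ∫⁻ x, f x * f (x + c) ∂μ ≤ ∫⁻ x, f x ^ 2 ∂μ := by
  calc ∫⁻ x, f x * f (x + c) ∂μ
      ≤ (∫⁻ x, f x ^ (2 : ℝ) ∂μ) ^ (1 / (2 : ℝ)) * (∫⁻ x, f (x + c) ^ (2 : ℝ) ∂μ) ^ (1 / (2 : ℝ)) :=
        ENNReal.lintegral_mul_le_Lp_mul_Lq μ Real.HolderConjugate.two_two hf.aemeasurable
          (hf.comp (measurable_add_const c)).aemeasurable
    _ = ∫⁻ x, f x ^ 2 ∂μ := by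
        rw [lintegral_add_right_eq_self (fun x ↦ f x ^ (2 : ℝ)) c,
          ← ENNReal.rpow_add_of_nonneg _ _ (by norm_num) (by norm_num)]
        norm_num

lemma measurable_measure_closedBall (ρ : Measure ℝ) [SFinite ρ] (η : ℝ) :
    Measurable fun t ↦ ρ (closedBall t η) :=
  measurable_measure_prodMk_left (s := {p : ℝ × ℝ | dist p.2 p.1 ≤ η})
    (measurableSet_le (by fun_prop) measurable_const)

lemma lintegral_measure_closedBall_mul (ρ₁ ρ₂ : Measure ℝ) [SFinite ρ₁] [SFinite ρ₂] (η c : ℝ) :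
    ∫⁻ w, ρ₁ (closedBall w η) * ρ₂ (closedBall (w + c) η)
      = ∫⁻ a, ∫⁻ b, tent η (a - b + c) ∂ρ₂ ∂ρ₁ := by
  set E : Set ((ℝ × ℝ) × ℝ) := {p | p.2 ∈ closedBall p.1.1 η ∧ p.2 + c ∈ closedBall p.1.2 η}
  have hE : MeasurableSet E :=
    (measurableSet_le (by fun_prop) measurable_const).inter
      (measurableSet_le (by fun_prop) measurable_const)
  have hfiber : ∀ p : ℝ × ℝ, Prod.mk p ⁻¹' E = closedBall p.1 η ∩ closedBall (p.2 - c) η := by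
    rintro ⟨a, b⟩
    ext w
    simp only [E, mem_preimage, mem_ofPred_eq, mem_inter_iff, mem_closedBall, Real.dist_eq]
    ring_nf
  have hslice : ∀ w : ℝ, (fun p ↦ (p, w)) ⁻¹' E = closedBall w η ×ˢ closedBall (w + c) η := by
    intro w
    ext ⟨a, b⟩
    simp only [E, mem_preimage, mem_ofPred_eq, mem_prod]
    rw [mem_closedBall_comm, mem_closedBall_comm (x := w + c)]
  calc ∫⁻ w, ρ₁ (closedBall w η) * ρ₂ (closedBall (w + c) η)
      = ((ρ₁.prod ρ₂).prod volume) E := by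
        simp_rw [Measure.prod_apply_symm hE, hslice, Measure.prod_prod]
    _ = ∫⁻ p, tent η (p.1 - p.2 + c) ∂(ρ₁.prod ρ₂) := by
        simp_rw [Measure.prod_apply hE, hfiber, volume_closedBall_inter_closedBall,
          sub_sub_eq_add_sub, add_sub_right_comm]
    _ = ∫⁻ a, ∫⁻ b, tent η (a - b + c) ∂ρ₂ ∂ρ₁ :=
        lintegral_prod _ (by fun_prop)

lemma lintegral_tent_conv_self (ρ : Measure ℝ) [SFinite ρ] [ρ.IsNegInvariant] (η c : ℝ) :
    ∫⁻ s, tent η (s + c) ∂(ρ ∗ ρ) = ∫⁻ w, ρ (closedBall w η) * ρ (closedBall (w + c) η) := by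
  rw [lintegral_measure_closedBall_mul, Measure.lintegral_conv (by fun_prop)]
  congr 1
  funext a
  rw [← lintegral_neg_eq_self (fun b ↦ tent η (a - b + c))]
  simp_rw [sub_neg_eq_add]

theorem conv_self_closedBall_le (ρ : Measure ℝ) [SFinite ρ] [ρ.IsNegInvariant] {η : ℝ}
    (hη : 0 < η) (x : ℝ) :
    (ρ ∗ ρ) (closedBall x η) ≤ 2 * (ρ ∗ ρ) (ball 0 (2 * η)) := by
  set ν := ρ ∗ ρ
  have key : ENNReal.ofReal η * ν (closedBall x η)
      ≤ ENNReal.ofReal η * (2 * ν (ball 0 (2 * η))) :=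
    calc ENNReal.ofReal η * ν (closedBall x η)
        = ∫⁻ s in closedBall x η, ENNReal.ofReal η ∂ν := by rw [setLIntegral_const, mul_comm]
      _ ≤ ∫⁻ s in closedBall x η, tent η (s + -x) ∂ν := by
          refine setLIntegral_mono (by fun_prop) fun s hs ↦ ofReal_le_tent ?_
          rwa [mem_closedBall, Real.dist_eq, sub_eq_add_neg] at hs
      _ ≤ ∫⁻ s, tent η (s + -x) ∂ν := setLIntegral_le_lintegral _ _
      _ = ∫⁻ w, ρ (closedBall w η) * ρ (closedBall (w + -x) η) := lintegral_tent_conv_self ρ η _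
      _ ≤ ∫⁻ w, ρ (closedBall w η) ^ 2 :=
          lintegral_mul_comp_add_right_le_lintegral_sq volume (measurable_measure_closedBall ρ η) _
      _ = ∫⁻ s, tent η s ∂ν := by simpa [sq] using (lintegral_tent_conv_self ρ η 0).symm
      _ ≤ ∫⁻ s, (ball 0 (2 * η)).indicator (fun _ ↦ ENNReal.ofReal (2 * η)) s ∂ν :=
          lintegral_mono (tent_le_indicator_ball η)
      _ = ENNReal.ofReal η * (2 * ν (ball 0 (2 * η))) := by
          rw [lintegral_indicator measurableSet_ball, setLIntegral_const,
            ENNReal.ofReal_mul zero_le_two, ENNReal.ofReal_ofNat]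
          ring
  exact (ENNReal.mul_le_mul_iff_right (ENNReal.ofReal_pos.2 hη).ne' ENNReal.ofReal_ne_top).1 key

theorem conv_self_closedBall_le_four (ρ : Measure ℝ) [SFinite ρ] [ρ.IsNegInvariant] {δ : ℝ}
    (hδ : 0 < δ) (x : ℝ) :
    (ρ ∗ ρ) (closedBall x δ) ≤ 4 * (ρ ∗ ρ) (ball 0 δ) := by
  have hcover :
      closedBall x δ ⊆ closedBall (x - δ / 2) (δ / 2) ∪ closedBall (x + δ / 2) (δ / 2) := by
    intro y hy
    rw [mem_closedBall, Real.dist_eq, abs_le] at hy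
    simp only [mem_union, mem_closedBall, Real.dist_eq, abs_le]
    by_cases h : y ≤ x
    · left; constructor <;> linarith
    · right; constructor <;> linarith
  have half := conv_self_closedBall_le ρ (half_pos hδ)
  rw [mul_div_cancel₀ δ two_ne_zero] at half
  calc (ρ ∗ ρ) (closedBall x δ)
      ≤ (ρ ∗ ρ) (closedBall (x - δ / 2) (δ / 2)) + (ρ ∗ ρ) (closedBall (x + δ / 2) (δ / 2)) :=
        (measure_mono hcover).trans (measure_union_le _ _)
    _ ≤ 2 * (ρ ∗ ρ) (ball 0 δ) + 2 * (ρ ∗ ρ) (ball 0 δ) := add_le_add (half _) (half _)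
    _ = 4 * (ρ ∗ ρ) (ball 0 δ) := by ring

theorem conv_ball_zero_le (ν ρ : Measure ℝ) [SFinite ν] [IsProbabilityMeasure ρ] {δ : ℝ}
    {C : ℝ≥0∞} (hν : ∀ x, ν (ball x δ) ≤ C) :
    (ν ∗ ρ) (ball 0 δ) ≤ C := by
  rw [Measure.conv_comm, Measure.conv, Measure.map_apply measurable_add measurableSet_ball,
    Measure.prod_apply (measurable_add measurableSet_ball)]
  calc ∫⁻ y, ν (Prod.mk y ⁻¹' ((fun p : ℝ × ℝ ↦ p.1 + p.2) ⁻¹' ball 0 δ)) ∂ρ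
      ≤ ∫⁻ _, C ∂ρ := lintegral_mono fun y ↦ le_of_eq_of_le ?_ (hν (-y))
    _ = C := by simp
  congr 1
  ext z
  simp [Real.dist_eq, add_comm]

section

variable {Ω ι : Type*} [MeasurableSpace Ω] {μ : Measure Ω} {X : ι → Ω → ℝ}

lemma ProbabilityTheory.iIndepFun.indepFun_finsetSum_finsetSum (hX : iIndepFun X μ)
    (hmeas : ∀ i, Measurable (X i)) {s t : Finset ι} (hst : Disjoint s t) :
    IndepFun (∑ i ∈ s, X i) (∑ i ∈ t, X i) μ := by
  have h := (hX.indepFun_finset s t hst hmeas).comp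
    (Finset.measurable_sum Finset.univ fun (i : s) _ ↦ measurable_pi_apply i)
    (Finset.measurable_sum Finset.univ fun (i : t) _ ↦ measurable_pi_apply i)
  convert h using 1 <;> ext ω <;>
    simp only [Function.comp_apply, Finset.sum_apply] <;> exact (Finset.sum_coe_sort _ _).symm

lemma identDistrib_finsetSum [Countable ι] {Ω' : Type*} [MeasurableSpace Ω'] {ν : Measure Ω'}
    {Y : ι → Ω' → ℝ} (hX : iIndepFun X μ) (hY : iIndepFun Y ν)
    (h : ∀ i, IdentDistrib (X i) (Y i) μ ν) (s : Finset ι) :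
    IdentDistrib (∑ i ∈ s, X i) (∑ i ∈ s, Y i) μ ν := by
  have := (IdentDistrib.pi h hX hY).comp (u := fun v ↦ ∑ i ∈ s, v i) (by fun_prop)
  simpa only [Finset.sum_fn, Function.comp_def] using this

lemma isNegInvariant_map_finsetSum [Countable ι] (hX : iIndepFun X μ)
    (hsymm : ∀ i, IdentDistrib (X i) (-X i) μ μ) (s : Finset ι) :
    (μ.map (∑ i ∈ s, X i)).IsNegInvariant := by
  have hneg := identDistrib_finsetSum hX (hX.comp (fun _ ↦ Neg.neg) fun _ ↦ measurable_neg)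
    hsymm s
  constructor
  rw [Measure.neg, AEMeasurable.map_map_of_aemeasurable measurable_neg.aemeasurable
    hneg.aemeasurable_fst, hneg.map_eq]
  congr 1
  ext ω
  simp [Finset.sum_apply]

end

section

variable {Ω : Type*} [MeasurableSpace Ω] {μ : Measure Ω} {X : ℕ → Ω → ℝ}

lemma map_sum_range_add [IsFiniteMeasure μ] (hX : iIndepFun X μ) (hmeas : ∀ i, Measurable (X i))
    (hident : ∀ i, IdentDistrib (X i) (X 0) μ μ) (m k : ℕ) :
    μ.map (∑ i ∈ Finset.range (m + k), X i)
      = μ.map (∑ i ∈ Finset.range m, X i) ∗ μ.map (∑ i ∈ Finset.range k, X i) := by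
  have hshift : IdentDistrib (∑ i ∈ Finset.range k, X (m + i)) (∑ i ∈ Finset.range k, X i) μ μ :=
    identDistrib_finsetSum (hX.precomp (add_right_injective m)) hX
      (fun i ↦ (hident _).trans (hident i).symm) _
  have hdisj : Disjoint (Finset.range m) ((Finset.range k).map (addLeftEmbedding m)) := by
    simp only [Finset.disjoint_left, Finset.mem_range, Finset.mem_map, addLeftEmbedding_apply]
    omega
  have hindep := hX.indepFun_finsetSum_finsetSum hmeas hdisj
  simp only [Finset.sum_map, addLeftEmbedding_apply] at hindep
  rw [Finset.sum_range_add, hindep.map_add_eq_map_conv_map (by fun_prop) (by fun_prop),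
    hshift.map_eq]

variable [IsProbabilityMeasure μ] (hX : iIndepFun X μ) (hmeas : ∀ i, Measurable (X i))
  (hident : ∀ i, IdentDistrib (X i) (X 0) μ μ) (hsymm : ∀ i, IdentDistrib (X i) (-X i) μ μ)
include hX hmeas hident hsymm

theorem map_sum_range_add_self_closedBall_le (m : ℕ) {δ : ℝ} (hδ : 0 < δ) (x : ℝ) :
    μ.map (∑ i ∈ Finset.range (m + m), X i) (closedBall x δ)
      ≤ 4 * μ.map (∑ i ∈ Finset.range (m + m), X i) (ball 0 δ) := by
  have := isNegInvariant_map_finsetSum hX hsymm (Finset.range m)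
  rw [map_sum_range_add hX hmeas hident]
  exact conv_self_closedBall_le_four _ hδ x

theorem map_sum_range_two_mul_add_one_ball_le (n : ℕ) {ε : ℝ} (hε : 0 < ε) :
    μ.map (∑ i ∈ Finset.range (2 * n + 1), X i) (ball 0 ε)
      ≤ 4 * μ.map (∑ i ∈ Finset.range (2 * n), X i) (ball 0 ε) := by
  have hindep : IndepFun (∑ i ∈ Finset.range (2 * n), X i) (X (2 * n)) μ :=
    hX.indepFun_finsetSum_of_notMem hmeas Finset.notMem_range_self
  have : IsProbabilityMeasure (μ.map (X (2 * n))) :=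
    Measure.isProbabilityMeasure_map (hmeas _).aemeasurable
  rw [Finset.sum_range_succ, hindep.map_add_eq_map_conv_map (by fun_prop) (hmeas _)]
  refine conv_ball_zero_le _ _ fun x ↦ (measure_mono ball_subset_closedBall).trans ?_
  rw [two_mul]
  exact map_sum_range_add_self_closedBall_le hX hmeas hident hsymm n hε x

end

/-- For a random walk with i.i.d. symmetric steps: for even `n`,
`P(S_n ∈ [x−δ, x+δ]) ≤ 4 P(S_n ∈ (−δ, δ))`; in particular
`P(|S_{2n+1}| < ε) ≤ 4 P(|S_{2n}| < ε)`. -/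
theorem stmt7 {Ω : Type*} [MeasurableSpace Ω] (μ : Measure Ω) [IsProbabilityMeasure μ]
    (X : ℕ → Ω → ℝ) (hmeas : ∀ i, Measurable (X i))
    (hindep : iIndepFun X μ)
    (hident : ∀ i, IdentDistrib (X i) (X 0) μ μ)
    (hsym : Measure.map (X 0) μ = Measure.map (fun ω => -X 0 ω) μ)
    (S : ℕ → Ω → ℝ) (hS : ∀ n ω, S n ω = ∑ i ∈ Finset.range n, X i ω) :
    (∀ n : ℕ, Even n → ∀ x δ : ℝ, 0 < δ →
      μ {ω | S n ω ∈ Set.Icc (x - δ) (x + δ)} ≤ 4 * μ {ω | S n ω ∈ Set.Ioo (-δ) δ}) ∧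
    (∀ (n : ℕ) (ε : ℝ), 0 < ε →
      μ {ω | |S (2 * n + 1) ω| < ε} ≤ 4 * μ {ω | |S (2 * n) ω| < ε}) := by
  obtain rfl : S = fun n ↦ ∑ i ∈ Finset.range n, X i := by
    funext n ω
    rw [hS, Finset.sum_apply]
  have hmeasS : ∀ n, Measurable (∑ i ∈ Finset.range n, X i) := fun n ↦ by fun_prop
  have hsymm : ∀ i, IdentDistrib (X i) (-X i) μ μ := fun i ↦
    ((hident i).trans ⟨(hmeas 0).aemeasurable, (hmeas 0).neg.aemeasurable, hsym⟩).trans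
      ((hident i).symm.comp measurable_neg)
  refine ⟨?_, fun n ε hε ↦ ?_⟩
  · rintro n ⟨m, rfl⟩ x δ hδ
    have := map_sum_range_add_self_closedBall_le hindep hmeas hident hsymm m hδ x
    rwa [Measure.map_apply (hmeasS _) measurableSet_closedBall,
      Measure.map_apply (hmeasS _) measurableSet_ball, Real.closedBall_eq_Icc, Real.ball_eq_Ioo,
      zero_sub, zero_add] at this
  · have := map_sum_range_two_mul_add_one_ball_le hindep hmeas hident hsymm n hε
    rw [Measure.map_apply (hmeasS _) measurableSet_ball,
      Measure.map_apply (hmeasS _) measurableSet_ball] at this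
    convert this using 3 <;> ext ω <;> simp
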